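/- Let Id ∈ P_{2n} be the pairing connecting Uᵢ to Bᵢ for each i, viewed as a fixed-point-free involution in S_{2n}, and let Oₙ ⊆ S_{2n} be its stabilizer under conjugation (the hyperoctahedral group). For any π ∈ S_{2n}, setting |πOₙ| = min_{σ ∈ πOₙ} |σ|, one has |π·Id·π⁻¹·Id| = 2·|πOₙ|, where |σ| denotes minimal transposition length. -/

import Mathlib

set_option linter.unusedSectionVars false
set_option maxHeartbeats 1000000

/-- The minimal number of transpositions needed to write a permutation
as a product of transpositions. -/
noncomputable def permLength {α : Type*} [DecidableEq α] (σ : Equiv.Perm α) : ℕ :=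
  sInf {k | ∃ l : List (Equiv.Perm α), l.length = k ∧ (∀ τ ∈ l, τ.IsSwap) ∧ l.prod = σ}

namespace HypAux

open Equiv Equiv.Perm

variable {α : Type*} [DecidableEq α] [Fintype α]

lemma permLength_set_nonempty (σ : Perm α) :
    {k | ∃ l : List (Perm α), l.length = k ∧ (∀ τ ∈ l, τ.IsSwap) ∧ l.prod = σ}.Nonempty := by
  obtain ⟨l, hl, hsw⟩ := (truncSwapFactors σ).out
  exact ⟨l.length, l, rfl, hsw, hl⟩

lemma permLength_spec (σ : Perm α) :
    ∃ l : List (Perm α), l.length = permLength σ ∧ (∀ τ ∈ l, τ.IsSwap) ∧ l.prod = σ :=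
  Nat.sInf_mem (permLength_set_nonempty σ)

lemma permLength_le {σ : Perm α} {l : List (Perm α)} (hsw : ∀ τ ∈ l, τ.IsSwap)
    (hp : l.prod = σ) : permLength σ ≤ l.length :=
  Nat.sInf_le ⟨l, rfl, hsw, hp⟩

lemma permLength_one : permLength (1 : Perm α) = 0 :=
  Nat.le_zero.1 (permLength_le (l := []) (by simp) (by simp))

lemma permLength_mul_le (σ τ : Perm α) :
    permLength (σ * τ) ≤ permLength σ + permLength τ := by
  obtain ⟨l₁, hl₁, hsw₁, hp₁⟩ := permLength_spec σ
  obtain ⟨l₂, hl₂, hsw₂, hp₂⟩ := permLength_spec τ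
  have := permLength_le (σ := σ * τ) (l := l₁ ++ l₂)
    (by intro x hx; rcases List.mem_append.1 hx with h | h; exacts [hsw₁ x h, hsw₂ x h])
    (by rw [List.prod_append, hp₁, hp₂])
  simpa [hl₁, hl₂] using this

lemma permLength_swap_le {a b : α} (hab : a ≠ b) : permLength (swap a b) ≤ 1 :=
  permLength_le (l := [swap a b]) (by simpa using ⟨a, b, hab, rfl⟩) (by simp)

lemma permLength_inv_le (σ : Perm α) : permLength σ⁻¹ ≤ permLength σ := by
  obtain ⟨l, hl, hsw, hp⟩ := permLength_spec σ
  have hrev : ((l.map (fun x => x⁻¹)).reverse).prod = σ⁻¹ := by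
    rw [← List.prod_inv_reverse, hp]
  have := permLength_le (σ := σ⁻¹) (l := (l.map (fun x => x⁻¹)).reverse)
    (by
      intro x hx
      rw [List.mem_reverse, List.mem_map] at hx
      obtain ⟨y, hy, rfl⟩ := hx
      obtain ⟨u, v, huv, rfl⟩ := hsw y hy
      exact ⟨u, v, huv, by rw [swap_inv]⟩) hrev
  simpa [hl] using this

lemma permLength_inv (σ : Perm α) : permLength σ⁻¹ = permLength σ :=
  le_antisymm (permLength_inv_le σ) (by simpa using permLength_inv_le σ⁻¹)

lemma permLength_conj_le (π σ : Perm α) : permLength (π * σ * π⁻¹) ≤ permLength σ := by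
  obtain ⟨l, hl, hsw, hp⟩ := permLength_spec σ
  have hprod : (l.map (fun x => π * x * π⁻¹)).prod = π * σ * π⁻¹ := by
    have := List.prod_hom l (MulAut.conj π).toMonoidHom
    simp only [MulAut.conj_apply, MulEquiv.coe_toMonoidHom] at this ⊢
    rw [show (fun x => π * x * π⁻¹) = ⇑(MulAut.conj π) from rfl, this, hp]
  have := permLength_le (σ := π * σ * π⁻¹) (l := l.map (fun x => π * x * π⁻¹))
    (by
      intro x hx
      rw [List.mem_map] at hx
      obtain ⟨y, hy, rfl⟩ := hx
      obtain ⟨u, v, huv, rfl⟩ := hsw y hy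
      exact ⟨π u, π v, fun h => huv (π.injective h), (swap_apply_apply π u v).symm⟩) hprod
  simpa [hl] using this

lemma permLength_conj (π σ : Perm α) : permLength (π * σ * π⁻¹) = permLength σ := by
  refine le_antisymm (permLength_conj_le π σ) ?_
  have := permLength_conj_le π⁻¹ (π * σ * π⁻¹)
  simpa [mul_assoc] using this

end HypAux

noncomputable section
namespace HypAux
open Equiv Equiv.Perm

variable {α : Type*} [DecidableEq α] [Fintype α]

/-- `|support| - #cycles` as an integer. -/
noncomputable def ncyc (σ : Perm α) : ℤ :=
  (σ.support.card : ℤ) - Multiset.card σ.cycleType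

lemma ncyc_one : ncyc (1 : Perm α) = 0 := by simp [ncyc]

lemma ncyc_isCycle {f : Perm α} (hf : f.IsCycle) : ncyc f = (f.support.card : ℤ) - 1 := by
  simp [ncyc, hf.cycleType]

lemma ncyc_disjoint_mul {f g : Perm α} (h : f.Disjoint g) :
    ncyc (f * g) = ncyc f + ncyc g := by
  simp only [ncyc, h.card_support_mul, h.cycleType_mul, Multiset.card_add]
  push_cast
  ring

/-- Split lemma, cycle case: multiplying a cycle by a transposition of two of its
points decreases `ncyc` by one. -/
theorem ncyc_swap_mul_isCycle {f : Perm α} (hf : f.IsCycle) {a b : α} (hab : a ≠ b)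
    (ha : a ∈ f.support) (hb : b ∈ f.support) :
    ncyc (swap a b * f) = ncyc f - 1 := by
  rw [mem_support] at ha hb
  have hcard2 : 2 ≤ f.support.card := hf.two_le_card_support
  by_cases h1 : f a = b
  · subst h1
    by_cases h2 : f (f a) = a
    · have hfs : f = swap a (f a) := hf.eq_swap_of_apply_apply_eq_self ha h2
      have hprod : swap a (f a) * f = 1 := by
        rw [hfs, swap_apply_left, swap_mul_self]
      have hsupp : f.support.card = 2 := by
        rw [hfs]; exact card_support_swap (Ne.symm ha)
      rw [hprod, ncyc_one, ncyc_isCycle hf, hsupp]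
      norm_num
    · have hc := hf.swap_mul ha h2
      have hsupp := support_swap_mul_eq f a h2
      rw [ncyc_isCycle hc, ncyc_isCycle hf, hsupp]
      have : (f.support \ {a}).card = f.support.card - 1 := by
        rw [Finset.sdiff_singleton_eq_erase, Finset.card_erase_of_mem (mem_support.2 ha)]
      rw [this]
      have : 1 ≤ f.support.card := by omega
      push_cast [Nat.cast_sub this]
      ring
  · by_cases h2 : f b = a
    · have hsw : swap a b = swap b (f b) := by rw [h2, swap_comm]
      rw [hsw]
      by_cases h3 : f (f b) = b
      · have hfs : f = swap b (f b) := hf.eq_swap_of_apply_apply_eq_self hb h3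
        have hprod : swap b (f b) * f = 1 := by
          rw [hfs, swap_apply_left, swap_mul_self]
        have hsupp : f.support.card = 2 := by
          rw [hfs]; exact card_support_swap (Ne.symm hb)
        rw [hprod, ncyc_one, ncyc_isCycle hf, hsupp]
        norm_num
      · have hc := hf.swap_mul hb h3
        have hsupp := support_swap_mul_eq f b h3
        rw [ncyc_isCycle hc, ncyc_isCycle hf, hsupp]
        have hcd : (f.support \ {b}).card = f.support.card - 1 := by
          rw [Finset.sdiff_singleton_eq_erase, Finset.card_erase_of_mem (mem_support.2 hb)]
        rw [hcd]
        have : 1 ≤ f.support.card := by omega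
        push_cast [Nat.cast_sub this]
        ring
    · -- non-adjacent split
      set B := swap a b * f with hB
      have hfa_ne_a : f a ≠ a := ha
      have hfb_ne_b : f b ≠ b := hb
      have hBa : B a = f a := by
        rw [hB, mul_apply, swap_apply_of_ne_of_ne hfa_ne_a h1]
      have hBb : B b = f b := by
        rw [hB, mul_apply, swap_apply_of_ne_of_ne h2 hfb_ne_b]
      have hBa' : B a ≠ a := by rw [hBa]; exact ha
      have hBb' : B b ≠ b := by rw [hBb]; exact hb
      have hsupp : B.support = f.support := by
        ext x
        simp only [mem_support]
        constructor
        · intro hx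
          intro hfx
          apply hx
          have hxa : x ≠ a := fun e => ha (by rw [← e]; exact hfx)
          have hxb : x ≠ b := fun e => hb (by rw [← e]; exact hfx)
          rw [hB, mul_apply, hfx, swap_apply_of_ne_of_ne hxa hxb]
        · intro hfx
          rw [hB, mul_apply]
          by_cases hfxa : f x = a
          · have : x ≠ b := fun e => h2 (e ▸ hfxa)
            rw [hfxa, swap_apply_left]; exact fun e => this e.symm
          by_cases hfxb : f x = b
          · have : x ≠ a := fun e => h1 (e ▸ hfxb)
            rw [hfxb, swap_apply_right]; exact fun e => this e.symm
          · rw [swap_apply_of_ne_of_ne hfxa hfxb]; exact hfx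
      have key : ∀ n : ℕ, B.SameCycle a ((f ^ n) a) ∨ B.SameCycle b ((f ^ n) a) := by
        intro n
        induction n with
        | zero => left; simpa using SameCycle.refl B a
        | succ n ih =>
          have hstep : (f ^ (n + 1)) a = f ((f ^ n) a) := by
            rw [pow_succ', mul_apply]
          by_cases hya : f ((f ^ n) a) = a
          · left; rw [hstep, hya]
          · by_cases hyb : f ((f ^ n) a) = b
            · right; rw [hstep, hyb]
            · have hBy : B ((f ^ n) a) = f ((f ^ n) a) := by
                rw [hB, mul_apply, swap_apply_of_ne_of_ne hya hyb]
              have h3 : B.SameCycle ((f ^ n) a) (f ((f ^ n) a)) :=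
                ⟨1, by rw [zpow_one, hBy]⟩
              rw [hstep]
              rcases ih with h | h
              · left; exact h.trans h3
              · right; exact h.trans h3
      have hconn : ∀ x, B x ≠ x → B.SameCycle a x ∨ B.SameCycle b x := by
        intro x hx
        have hfx : f x ≠ x := by
          rw [← mem_support, ← hsupp, mem_support]; exact hx
        obtain ⟨i, _, _, hi⟩ := (hf.sameCycle ha hfx).exists_pow_eq f
        rw [← hi]
        exact key i
      have hnot : ¬ B.SameCycle a b := by
        intro hcon
        have hBcyc : B.IsCycle :=
          ⟨a, hBa', fun y hy => (hconn y hy).elim id fun h => hcon.trans h⟩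
        have hsign : Perm.sign B = -Perm.sign f := by
          rw [hB, Perm.sign_mul, sign_swap hab, neg_one_mul]
        rw [hBcyc.sign, hf.sign, hsupp] at hsign
        rcases Int.units_eq_one_or ((-1 : ℤˣ) ^ f.support.card) with h | h <;>
          rw [h] at hsign <;> exact absurd hsign (by decide)
      set g₁ := B.cycleOf a with hg₁d
      set g₂ := B.cycleOf b with hg₂d
      have hg₁ : g₁.IsCycle := isCycle_cycleOf B hBa'
      have hg₂ : g₂.IsCycle := isCycle_cycleOf B hBb'
      have hd : g₁.Disjoint g₂ := by
        intro x
        by_cases hax : B.SameCycle a x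
        · right
          exact cycleOf_apply_of_not_sameCycle fun hbx => hnot (hax.trans hbx.symm)
        · left; exact cycleOf_apply_of_not_sameCycle hax
      have hprod : g₁ * g₂ = B := by
        ext x
        rw [mul_apply]
        by_cases hbx : B.SameCycle b x
        · have h2x : g₂ x = B x := hbx.cycleOf_apply
          have hnx : ¬ B.SameCycle a (B x) := fun h =>
            hnot (h.trans (sameCycle_apply_right.2 hbx).symm)
          rw [h2x, cycleOf_apply_of_not_sameCycle hnx]
        · have h2x : g₂ x = x := cycleOf_apply_of_not_sameCycle hbx
          rw [h2x]
          by_cases hax : B.SameCycle a x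
          · exact hax.cycleOf_apply
          · have hxB : B x = x := by
              by_contra h
              exact (hconn x h).elim hax hbx
            rw [cycleOf_apply_of_not_sameCycle hax, hxB]
      have hncyc : ncyc B = ncyc g₁ + ncyc g₂ := by
        rw [← hprod]; exact ncyc_disjoint_mul hd
      have hcards : g₁.support.card + g₂.support.card = B.support.card := by
        rw [← hprod]; exact hd.card_support_mul.symm
      rw [hsupp] at hcards
      rw [hncyc, ncyc_isCycle hg₁, ncyc_isCycle hg₂, ncyc_isCycle hf]
      have : (g₁.support.card : ℤ) + g₂.support.card = (f.support.card : ℤ) := by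
        exact_mod_cast congrArg (Nat.cast (R := ℤ)) hcards
      linarith

end HypAux

namespace HypAux
open Equiv Equiv.Perm

variable {α : Type*} [DecidableEq α] [Fintype α]

/-- Split lemma: transposing two points on the same cycle decreases `ncyc` by 1. -/
theorem ncyc_swap_mul_sameCycle {σ : Perm α} {a b : α} (hab : a ≠ b) (ha : σ a ≠ a)
    (hsc : σ.SameCycle a b) : ncyc (swap a b * σ) = ncyc σ - 1 := by
  set f := σ.cycleOf a with hfdef
  have hfc : f.IsCycle := isCycle_cycleOf σ ha
  have hasup : a ∈ f.support := mem_support_cycleOf_iff.2 ⟨SameCycle.refl _ _, mem_support.2 ha⟩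
  have hbsup : b ∈ f.support := mem_support_cycleOf_iff.2 ⟨hsc, mem_support.2 ha⟩
  set h := f⁻¹ * σ with hhdef
  have hfh : f * h = σ := by rw [hhdef, ← mul_assoc, mul_inv_cancel, one_mul]
  have hdich : ∀ x, f x = σ x ∨ f x = x := by
    intro x
    rw [hfdef, cycleOf_apply]
    split_ifs with hx
    · exact Or.inl rfl
    · exact Or.inr rfl
  have hfix : ∀ x, f x = σ x → h x = x := by
    intro x hx
    rw [hhdef, mul_apply, ← hx, Perm.inv_def, symm_apply_apply]
  have hdisj : f.Disjoint h := by
    intro x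
    rcases hdich x with hx | hx
    · exact Or.inr (hfix x hx)
    · exact Or.inl hx
  have hdisj2 : (swap a b * f).Disjoint h := by
    intro x
    rcases hdich x with hx | hx
    · exact Or.inr (hfix x hx)
    · left
      have hxa : x ≠ a := fun e => (mem_support.1 hasup) (by rw [e] at hx; exact hx)
      have hxb : x ≠ b := fun e => (mem_support.1 hbsup) (by rw [e] at hx; exact hx)
      rw [mul_apply, hx, swap_apply_of_ne_of_ne hxa hxb]
  have e1 : ncyc (swap a b * σ) = ncyc (swap a b * f) + ncyc h := by
    rw [← hfh, ← mul_assoc]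
    exact ncyc_disjoint_mul hdisj2
  have e2 : ncyc σ = ncyc f + ncyc h := by
    rw [← hfh]; exact ncyc_disjoint_mul hdisj
  rw [e1, e2, ncyc_swap_mul_isCycle hfc hab hasup hbsup]
  ring

/-- Multiplying by a transposition changes `ncyc` by at most one (upward). -/
theorem ncyc_swap_mul_le {σ : Perm α} {a b : α} (hab : a ≠ b) :
    ncyc (swap a b * σ) ≤ ncyc σ + 1 := by
  by_cases ha : σ a = a
  · -- a is fixed: merge a into the cycle of b (or create a 2-cycle)
    set B := swap a b * σ with hB
    have hBa : B a = b := by rw [hB, mul_apply, ha, swap_apply_left]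
    have hBa' : B a ≠ a := by rw [hBa]; exact hab.symm
    have hsb : swap a b * B = σ := by rw [hB, ← mul_assoc, swap_mul_self, one_mul]
    have hspl := ncyc_swap_mul_sameCycle (σ := B) hab hBa' ⟨1, by rw [zpow_one, hBa]⟩
    rw [hsb] at hspl
    rw [hspl]; ring_nf; exact le_refl _
  · by_cases hb : σ b = b
    · set B := swap a b * σ with hB
      have hBb : B b = a := by rw [hB, mul_apply, hb, swap_apply_right]
      have hBb' : B b ≠ b := by rw [hBb]; exact hab
      have hsb : swap b a * B = σ := by
        rw [hB, swap_comm, ← mul_assoc, swap_mul_self, one_mul]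
      have hspl := ncyc_swap_mul_sameCycle (σ := B) hab.symm hBb' ⟨1, by rw [zpow_one, hBb]⟩
      rw [hsb] at hspl
      linarith
    · by_cases hsc : σ.SameCycle a b
      · rw [ncyc_swap_mul_sameCycle hab ha hsc]; linarith
      · -- merge two distinct cycles
        set B := swap a b * σ with hB
        have hσa : σ a ≠ b := fun e => hsc ⟨1, by rw [zpow_one, e]⟩
        have hBa : B a = σ a := by rw [hB, mul_apply, swap_apply_of_ne_of_ne ha hσa]
        have hBa' : B a ≠ a := by rw [hBa]; exact ha
        have hkey : ∀ n : ℕ, B.SameCycle a ((σ ^ n) a) := by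
          intro n
          induction n with
          | zero => simpa using SameCycle.refl B a
          | succ n ih =>
            have hstep : (σ ^ (n + 1)) a = σ ((σ ^ n) a) := by rw [pow_succ', mul_apply]
            by_cases hya : σ ((σ ^ n) a) = a
            · rw [hstep, hya]
            · have hyb : σ ((σ ^ n) a) ≠ b := by
                intro e
                refine hsc ⟨((n + 1 : ℕ) : ℤ), ?_⟩
                rw [zpow_natCast, hstep, e]
              have hBy : B ((σ ^ n) a) = σ ((σ ^ n) a) := by
                rw [hB, mul_apply, swap_apply_of_ne_of_ne hya hyb]
              rw [hstep]
              exact ih.trans ⟨1, by rw [zpow_one, hBy]⟩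
        have hscB : B.SameCycle a b := by
          have hsc1 : σ.SameCycle a (σ⁻¹ a) := ⟨-1, by simp⟩
          obtain ⟨i, -, -, hi⟩ := hsc1.exists_pow_eq σ
          have h2 : B.SameCycle a (σ⁻¹ a) := hi ▸ hkey i
          have h3 : B (σ⁻¹ a) = b := by
            rw [hB, mul_apply, Perm.inv_def, apply_symm_apply, swap_apply_left]
          exact h2.trans ⟨1, by rw [zpow_one, h3]⟩
        have hspl := ncyc_swap_mul_sameCycle (σ := B) hab hBa' hscB
        have hsb : swap a b * B = σ := by rw [hB, ← mul_assoc, swap_mul_self, one_mul]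
        rw [hsb] at hspl
        linarith

end HypAux

namespace HypAux
open Equiv Equiv.Perm

variable {α : Type*} [DecidableEq α] [Fintype α]

lemma ncyc_prod_le (l : List (Perm α)) (hsw : ∀ τ ∈ l, τ.IsSwap) :
    ncyc l.prod ≤ (l.length : ℤ) := by
  induction l with
  | nil => simp [ncyc_one]
  | cons τ l ih =>
    obtain ⟨a, b, hab, rfl⟩ := hsw τ List.mem_cons_self
    rw [List.prod_cons]
    have h1 := ncyc_swap_mul_le (σ := l.prod) hab
    have h2 := ih fun τ ht => hsw τ (List.mem_cons_of_mem _ ht)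
    simp only [List.length_cons]
    push_cast
    linarith

lemma permLength_le_ncyc : ∀ (N : ℕ) (σ : Perm α), σ.support.card ≤ N →
    (permLength σ : ℤ) ≤ ncyc σ := by
  intro N
  induction N with
  | zero =>
    intro σ hσ
    have : σ = 1 := by
      rw [← support_eq_empty_iff, ← Finset.card_eq_zero]
      omega
    simp [this, permLength_one, ncyc_one]
  | succ N ih =>
    intro σ hσ
    by_cases h1 : σ = 1
    · simp [h1, permLength_one, ncyc_one]
    · obtain ⟨x, hx⟩ : ∃ x, σ x ≠ x := by
        by_contra h
        push_neg at h
        exact h1 (Equiv.ext h)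
      have hxne : x ≠ σ x := fun e => hx e.symm
      have hlt := card_support_swap_mul hx
      have hle := ih (swap x (σ x) * σ) (by omega)
      have hspl := ncyc_swap_mul_sameCycle (σ := σ) (a := x) (b := σ x) hxne hx
        ⟨1, by rw [zpow_one]⟩
      have hlen : permLength σ ≤ 1 + permLength (swap x (σ x) * σ) := by
        have hmul : σ = swap x (σ x) * (swap x (σ x) * σ) := by
          rw [← mul_assoc, swap_mul_self, one_mul]
        calc permLength σ = permLength (swap x (σ x) * (swap x (σ x) * σ)) := by
              rw [← hmul]
          _ ≤ permLength (swap x (σ x)) + permLength (swap x (σ x) * σ) :=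
              permLength_mul_le _ _
          _ ≤ 1 + permLength (swap x (σ x) * σ) := by
              have := permLength_swap_le hxne
              omega
      have : (permLength σ : ℤ) ≤ 1 + (permLength (swap x (σ x) * σ) : ℤ) := by
        exact_mod_cast hlen
      linarith

theorem permLength_eq_ncyc (σ : Perm α) : (permLength σ : ℤ) = ncyc σ := by
  refine le_antisymm (permLength_le_ncyc σ.support.card σ le_rfl) ?_
  obtain ⟨l, hlen, hsw, hprod⟩ := permLength_spec σ
  calc ncyc σ = ncyc l.prod := by rw [hprod]
    _ ≤ (l.length : ℤ) := ncyc_prod_le l hsw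
    _ = (permLength σ : ℤ) := by rw [hlen]

/-- Key lemma: peeling off a transposition along the cycle of a moved point
decreases the minimal transposition length by exactly one. -/
theorem permLength_swap_mul {σ : Perm α} {x : α} (hx : σ x ≠ x) :
    permLength (swap x (σ x) * σ) + 1 = permLength σ := by
  have hspl := ncyc_swap_mul_sameCycle (σ := σ) (a := x) (b := σ x)
    (fun e => hx e.symm) hx ⟨1, by rw [zpow_one]⟩
  have h1 := permLength_eq_ncyc (swap x (σ x) * σ)
  have h2 := permLength_eq_ncyc σ
  have : (permLength (swap x (σ x) * σ) : ℤ) + 1 = (permLength σ : ℤ) := by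
    rw [h1, h2, hspl]; ring
  exact_mod_cast this

end HypAux

namespace HypAux
open Equiv Equiv.Perm

variable {α : Type*} [DecidableEq α] [Fintype α]

theorem exists_coset_rep (T : Perm α) (hT : T * T = 1) (hTf : ∀ x, T x ≠ x) :
    ∀ (d : ℕ) (S : Perm α), (Finset.univ.filter fun y => S y ≠ T y).card = d →
      S * S = 1 → (∀ x, S x ≠ x) →
      ∃ ρ : Perm α, ρ * T * ρ⁻¹ = S ∧ 2 * permLength ρ ≤ permLength (S * T) := by
  have hTinv : T⁻¹ = T := inv_eq_of_mul_eq_one_right hT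
  have hTT : ∀ y, T (T y) = y := fun y => by rw [← mul_apply, hT, one_apply]
  intro d
  induction d using Nat.strong_induction_on with
  | _ d IH =>
  intro S hd hS hSf
  have hSinv : S⁻¹ = S := inv_eq_of_mul_eq_one_right hS
  have hSS : ∀ y, S (S y) = y := fun y => by rw [← mul_apply, hS, one_apply]
  have hScancel : ∀ z : Perm α, S * (S * z) = z := fun z => by
    rw [← mul_assoc, hS, one_mul]
  by_cases hST : S = T
  · exact ⟨1, by simp [hST], by simp [permLength_one]⟩
  obtain ⟨x, hx⟩ : ∃ x, S x ≠ T x := by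
    by_contra h; push_neg at h; exact hST (Equiv.ext h)
  set τ := swap (S x) (T x) with hτ
  have hτinv : τ⁻¹ = τ := by rw [hτ, swap_inv]
  have hτsq : τ * τ = 1 := by rw [hτ, swap_mul_self]
  have hτcancel : ∀ z : Perm α, τ * (τ * z) = z := fun z => by
    rw [← mul_assoc, hτsq, one_mul]
  have hττ : ∀ z, τ (τ z) = z := fun z => by rw [← mul_apply, hτsq, one_apply]
  set S' := τ * S * τ with hS'
  have hS'app : ∀ y, S' y = τ (S (τ y)) := fun y => by
    rw [hS', mul_apply, mul_apply]
  have hS'sq : S' * S' = 1 := by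
    rw [hS']
    simp only [mul_assoc]
    rw [hτcancel, hScancel, hτsq]
  have hS'f : ∀ y, S' y ≠ y := by
    intro y hy
    rw [hS'app] at hy
    have h2 := congrArg τ hy
    rw [hττ] at h2
    exact hSf (τ y) h2
  have hτx : τ x = x :=
    swap_apply_of_ne_of_ne (Ne.symm (hSf x)) (Ne.symm (hTf x))
  have hS'x : S' x = T x := by
    rw [hS'app, hτx, hτ, swap_apply_left]
  -- the disagreement set strictly decreases
  have hsub : (Finset.univ.filter fun y => S' y ≠ T y) ⊆
      (Finset.univ.filter fun y => S y ≠ T y) := by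
    intro y hy
    simp only [Finset.mem_filter, Finset.mem_univ, true_and] at hy ⊢
    intro hSy
    apply hy
    have hySx : y ≠ S x := by
      intro e
      have h1 : S y = x := by rw [e, hSS]
      rw [h1] at hSy
      have h3 : T x = y := by rw [hSy, hTT]
      exact hx (h3.trans e).symm
    have hyTx : y ≠ T x := by
      intro e
      have h1 : T y = x := by rw [e, hTT]
      rw [h1] at hSy
      have h2 : y = S x := by rw [← hSS y, hSy]
      exact hx (h2.symm.trans e)
    have hτy : τ y = y := by rw [hτ]; exact swap_apply_of_ne_of_ne hySx hyTx
    have hSyne1 : S y ≠ S x := by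
      intro e
      have h1 : y = x := S.injective e
      rw [h1] at hSy
      exact hx hSy
    have hSyne2 : S y ≠ T x := by
      intro e
      rw [hSy] at e
      have h1 : y = x := T.injective e
      rw [h1] at hSy
      exact hx hSy
    have hτSy : τ (S y) = S y := by rw [hτ]; exact swap_apply_of_ne_of_ne hSyne1 hSyne2
    rw [hS'app, hτy, hτSy]
    exact hSy
  have hmem1 : x ∈ (Finset.univ.filter fun y => S y ≠ T y) := by
    simp only [Finset.mem_filter, Finset.mem_univ, true_and]; exact hx
  have hmem2 : x ∉ (Finset.univ.filter fun y => S' y ≠ T y) := by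
    simp only [Finset.mem_filter, Finset.mem_univ, true_and, not_not]
    exact hS'x
  have hlt : (Finset.univ.filter fun y => S' y ≠ T y).card < d := by
    rw [← hd]
    exact Finset.card_lt_card ((Finset.ssubset_iff_of_subset hsub).2 ⟨x, hmem1, hmem2⟩)
  obtain ⟨ρ', hρ'conj, hρ'len⟩ := IH _ hlt S' rfl hS'sq hS'f
  -- length bookkeeping
  set A := S * T with hA
  have hAx : A x ≠ x := by
    intro e
    rw [hA, mul_apply] at e
    have h2 := congrArg S e
    rw [hSS] at h2
    exact hx h2.symm
  have step1 := permLength_swap_mul (σ := A) (x := x) hAx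
  set B := swap x (A x) * A with hBdef
  have hATx : A (T x) = S x := by rw [hA, mul_apply, hTT]
  have hSxne2 : S x ≠ A x := by
    rw [hA, mul_apply]
    intro e
    exact hTf x (S.injective e).symm
  have hBTx : B (T x) = S x := by
    rw [hBdef, mul_apply, hATx, swap_apply_of_ne_of_ne (hSf x) hSxne2]
  have hBTx' : B (T x) ≠ T x := by rw [hBTx]; exact hx
  have step2 := permLength_swap_mul (σ := B) (x := T x) hBTx'
  have hswA : swap x (A x) = S * τ * S := by
    have h2 : S (T x) = A x := by rw [hA, mul_apply]
    calc swap x (A x) = swap (S (S x)) (S (T x)) := by rw [hSS, h2]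
      _ = S * swap (S x) (T x) * S⁻¹ := swap_apply_apply S (S x) (T x)
      _ = S * τ * S := by rw [hSinv, hτ]
  have hid : swap (T x) (B (T x)) * B = S' * T := by
    rw [hBTx, hBdef, hswA, hA, hS']
    rw [show swap (T x) (S x) = τ by rw [hτ]; exact swap_comm _ _]
    simp only [mul_assoc]
    rw [hScancel]
  rw [hid] at step2
  -- step2 : permLength (S' * T) + 1 = permLength B
  -- step1 : permLength B + 1 = permLength A
  refine ⟨τ * ρ', ?_, ?_⟩
  · have h1 : τ * ρ' * T * (τ * ρ')⁻¹ = τ * (ρ' * T * ρ'⁻¹) * τ := by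
      rw [mul_inv_rev, hτinv]
      simp only [mul_assoc]
    rw [h1, hρ'conj, hS']
    simp only [mul_assoc]
    rw [hτcancel, hτsq, mul_one]
  · have hlenτ : permLength (τ * ρ') ≤ 1 + permLength ρ' := by
      calc permLength (τ * ρ') ≤ permLength τ + permLength ρ' := permLength_mul_le _ _
        _ ≤ 1 + permLength ρ' := by
            have : permLength τ ≤ 1 := by rw [hτ]; exact permLength_swap_le hx
            omega
    omega

end HypAux


/-- The identity pairing of the `2n` vertices, connecting `U_i` to `B_i`,
viewed as a fixed-point-free involution. -/
def IdPairing (n : ℕ) : Equiv.Perm (Fin n ⊕ Fin n) :=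
  Equiv.sumComm (Fin n) (Fin n)

/-- `|π Oₙ| = min_{σ ∈ π Oₙ} |σ|`, the minimal transposition length over the right coset
of the hyperoctahedral group (the stabilizer of the identity pairing). -/
noncomputable def cosetLength (n : ℕ) (π : Equiv.Perm (Fin n ⊕ Fin n)) : ℕ :=
  sInf {k | ∃ σ : Equiv.Perm (Fin n ⊕ Fin n),
    σ * IdPairing n * σ⁻¹ = IdPairing n ∧ k = permLength (π * σ)}

open Equiv Equiv.Perm HypAux

theorem permLength_conj_IdPairing (n : ℕ) (π : Equiv.Perm (Fin n ⊕ Fin n)) :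
    permLength (π * IdPairing n * π⁻¹ * IdPairing n) = 2 * cosetLength n π := by
  classical
  have hT : IdPairing n * IdPairing n = 1 := Equiv.ext fun x => by cases x <;> rfl
  have hTf : ∀ x, IdPairing n x ≠ x := by
    intro x; cases x <;> simp [IdPairing]
  have hTinv : (IdPairing n)⁻¹ = IdPairing n := inv_eq_of_mul_eq_one_right hT
  set T := IdPairing n with hTdef
  set S := π * T * π⁻¹ with hSdef
  have hS : S * S = 1 := by
    rw [hSdef]
    simp only [mul_assoc, inv_mul_cancel_left]
    rw [← mul_assoc T T, hT, one_mul]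
    simp
  have hSf : ∀ x, S x ≠ x := by
    intro x hx
    rw [hSdef] at hx
    simp only [mul_apply] at hx
    have h2 := congrArg (⇑π⁻¹) hx
    rw [Perm.inv_def, symm_apply_apply] at h2
    exact hTf _ h2
  have hKne : Set.Nonempty {k | ∃ σ : Equiv.Perm (Fin n ⊕ Fin n),
      σ * IdPairing n * σ⁻¹ = IdPairing n ∧ k = permLength (π * σ)} :=
    ⟨permLength π, 1, by simp, by rw [mul_one]⟩
  have hcoset : cosetLength n π = sInf {k | ∃ σ : Equiv.Perm (Fin n ⊕ Fin n),
      σ * IdPairing n * σ⁻¹ = IdPairing n ∧ k = permLength (π * σ)} := rfl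
  refine le_antisymm ?_ ?_
  · -- upper bound: subadditivity over the minimizing coset element
    obtain ⟨σ, hσ, hk⟩ := Nat.sInf_mem hKne
    have hkey : permLength (S * T) ≤ 2 * permLength (π * σ) := by
      have hρconj : (π * σ) * T * (π * σ)⁻¹ = S := by
        rw [mul_inv_rev, hSdef]
        calc π * σ * T * (σ⁻¹ * π⁻¹) = π * (σ * T * σ⁻¹) * π⁻¹ := by
              simp only [mul_assoc]
          _ = π * T * π⁻¹ := by rw [hTdef, hσ]
      have h1 : S * T = (π * σ) * (T * (π * σ)⁻¹ * T) := by
        rw [← hρconj]; simp only [mul_assoc]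
      calc permLength (S * T) = permLength ((π * σ) * (T * (π * σ)⁻¹ * T)) := by rw [← h1]
        _ ≤ permLength (π * σ) + permLength (T * (π * σ)⁻¹ * T) := permLength_mul_le _ _
        _ = permLength (π * σ) + permLength (π * σ)⁻¹ := by
              rw [show T * (π * σ)⁻¹ * T = T * (π * σ)⁻¹ * T⁻¹ by rw [hTinv], permLength_conj]
        _ = 2 * permLength (π * σ) := by rw [permLength_inv]; ring
    rw [hcoset, hk]
    exact hkey
  · -- lower bound: choose a good coset representative
    obtain ⟨ρ, hρconj, hρlen⟩ := exists_coset_rep T hT hTf _ S rfl hS hSf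
    have hσ0 : (π⁻¹ * ρ) * IdPairing n * (π⁻¹ * ρ)⁻¹ = IdPairing n := by
      rw [mul_inv_rev, inv_inv]
      calc π⁻¹ * ρ * IdPairing n * (ρ⁻¹ * π) = π⁻¹ * (ρ * T * ρ⁻¹) * π := by
            rw [hTdef]; simp only [mul_assoc]
        _ = π⁻¹ * (π * T * π⁻¹) * π := by rw [hρconj, hSdef]
        _ = IdPairing n := by
            rw [hTdef]
            simp only [mul_assoc, inv_mul_cancel_left]
            simp
    have hmem : permLength ρ ∈ {k | ∃ σ : Equiv.Perm (Fin n ⊕ Fin n),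
        σ * IdPairing n * σ⁻¹ = IdPairing n ∧ k = permLength (π * σ)} :=
      ⟨π⁻¹ * ρ, hσ0, by rw [← mul_assoc]; simp⟩
    have h2 : cosetLength n π ≤ permLength ρ := by
      rw [hcoset]; exact Nat.sInf_le hmem
    omega
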